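/- arXiv:1402.5804 — 3 statements merged into one kernel-verified Lean document; each statement's English description precedes it below -/
import Mathlib

section
/- Let 𝔤 be the 5-dimensional Lie algebra with basis E₁,...,E₅ and nonzero brackets [E₂,E₅] = E₁ and [E₄,E₅] = E₃. The bilinear skew-symmetric map Θ : 𝔤 × 𝔤 → ℝ given in this basis by the matrix [[0,1,0,0,0],[-1,0,0,0,0],[0,0,0,1,0],[0,0,-1,0,0],[0,0,0,0,0]] is a Lie algebra 2-cocycle: Θ([a,b],c) + Θ([b,c],a) + Θ([c,a],b) = 0 for all a,b,c ∈ 𝔤. Moreover Θ is not a coboundary: there is no linear map f : 𝔤 → ℝ with Θ(a,b) = f([a,b]) for all a,b. -/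
/-- The Lie bracket of the 5-dimensional Lie algebra `𝔤` in the basis
`E₁,…,E₅` with nonzero brackets `[E₂,E₅] = E₁` and `[E₄,E₅] = E₃`. -/
def gBr (a b : Fin 5 → ℝ) : Fin 5 → ℝ :=
  ![a 1 * b 4 - b 1 * a 4, 0, a 3 * b 4 - b 3 * a 4, 0, 0]

/-- The 2-cocycle `Θ` given in the basis by the matrix
`[[0,1,0,0,0],[-1,0,0,0,0],[0,0,0,1,0],[0,0,-1,0,0],[0,0,0,0,0]]`. -/
def gTheta (a b : Fin 5 → ℝ) : ℝ :=
  a 0 * b 1 - a 1 * b 0 + a 2 * b 3 - a 3 * b 2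

/-- `Θ` is a skew-symmetric 2-cocycle on `𝔤`, and it is not a coboundary. -/
theorem gTheta_cocycle_not_coboundary :
    (∀ a b : Fin 5 → ℝ, gTheta b a = - gTheta a b) ∧
    (∀ a b c : Fin 5 → ℝ, gTheta (gBr a b) c + gTheta (gBr b c) a + gTheta (gBr c a) b = 0) ∧
    ¬ ∃ f : (Fin 5 → ℝ) →ₗ[ℝ] ℝ, ∀ a b : Fin 5 → ℝ, gTheta a b = f (gBr a b) := by
  refine ⟨fun a b => by simp [gTheta]; ring, fun a b c => by simp [gTheta, gBr]; ring, ?_⟩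
  rintro ⟨f, hf⟩
  have h := hf ![1, 0, 0, 0, 0] ![0, 1, 0, 0, 0]
  have hz : gBr ![1, 0, 0, 0, 0] ![0, 1, 0, 0, 0] = (0 : Fin 5 → ℝ) := by
    funext i
    fin_cases i <;> simp [gBr]
  rw [hz, map_zero] at h
  simp [gTheta] at h
end

section
/- If (q₁,q₂,q₃,p₁,p₂,p₃) : ℝ → ℝ⁶ is a differentiable solution of Hamilton's equations q̇₁ = p₁, q̇₂ = p₂, q̇₃ = p₃ − (1/2)(q₁² + q₂²), ṗ₁ = q₁p₃ − (1/2)q₁³ − (1/2)q₁q₂², ṗ₂ = q₂p₃ − (1/2)q₁²q₂ − (1/2)q₂³, ṗ₃ = 0, then (x₁,y₁,x₂,y₂,z) := φ(q₁,q₂,q₃,p₁,p₂,p₃) = (q₁, p₁, q₂, p₂, p₃ − (1/2)(q₁² + q₂²)) is a solution of the Maxwell-Bloch equations ẋ₁ = y₁, ẏ₁ = x₁z, ẋ₂ = y₂, ẏ₂ = x₂z, ż = −(x₁y₁ + x₂y₂). -/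
/-- The map `φ` sends solutions of the canonical Hamiltonian system for `H̃` on
ℝ⁶ to solutions of the Maxwell-Bloch equations on ℝ⁵ : with
`x₁ = q₁`, `y₁ = p₁`, `x₂ = q₂`, `y₂ = p₂`, `z = p₃ − (1/2)(q₁² + q₂²)`,
the image curve satisfies `ẋ₁ = y₁`, `ẏ₁ = x₁z`, `ẋ₂ = y₂`, `ẏ₂ = x₂z`,
`ż = −(x₁y₁ + x₂y₂)`. -/
theorem phi_maps_solutions
    (q1 q2 q3 p1 p2 p3 : ℝ → ℝ)
    (hq1 : ∀ t, HasDerivAt q1 (p1 t) t)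
    (hq2 : ∀ t, HasDerivAt q2 (p2 t) t)
    (hq3 : ∀ t, HasDerivAt q3 (p3 t - (1/2) * ((q1 t)^2 + (q2 t)^2)) t)
    (hp1 : ∀ t, HasDerivAt p1 (q1 t * p3 t - (1/2) * (q1 t)^3 - (1/2) * q1 t * (q2 t)^2) t)
    (hp2 : ∀ t, HasDerivAt p2 (q2 t * p3 t - (1/2) * (q1 t)^2 * q2 t - (1/2) * (q2 t)^3) t)
    (hp3 : ∀ t, HasDerivAt p3 0 t) :
    let x1 := q1
    let y1 := p1
    let x2 := q2
    let y2 := p2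
    let z : ℝ → ℝ := fun t => p3 t - (1/2) * ((q1 t)^2 + (q2 t)^2)
    (∀ t, HasDerivAt x1 (y1 t) t) ∧
    (∀ t, HasDerivAt y1 (x1 t * z t) t) ∧
    (∀ t, HasDerivAt x2 (y2 t) t) ∧
    (∀ t, HasDerivAt y2 (x2 t * z t) t) ∧
    (∀ t, HasDerivAt z (-(x1 t * y1 t + x2 t * y2 t)) t) := by
  refine ⟨hq1, fun t => ?_, hq2, fun t => ?_, fun t => ?_⟩
  · have h := hp1 t; convert h using 1; ring
  · have h := hp2 t; convert h using 1; ring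
  · have h : HasDerivAt (fun t => p3 t - (1/2) * ((q1 t)^2 + (q2 t)^2))
      (0 - (1/2) * ((2:ℕ) * q1 t ^ 1 * p1 t + (2:ℕ) * q2 t ^ 1 * p2 t)) t :=
      (hp3 t).sub ((((hq1 t).pow 2).add ((hq2 t).pow 2)).const_mul (1/2))
    convert h using 1; push_cast; ring
end

section
/- The four vector fields u₁ = −t ∂/∂t + q₁ ∂/∂q₁ + q₂ ∂/∂q₂ + q₃ ∂/∂q₃, u₂ = ∂/∂t, u₃ = ∂/∂q₃, u₄ = q₂ ∂/∂q₁ − q₁ ∂/∂q₂ on ℝ × ℝ³ (coordinates t, q₁, q₂, q₃) span a 4-dimensional Lie algebra with brackets [u₁,u₂] = u₂, [u₁,u₃] = −u₃, and all other brackets of basis elements zero. This Lie algebra is isomorphic to the matrix Lie algebra of 4×4 matrices of the form with first row (0, d, b, c), second row zero, third row (0,0,−a,0), fourth row (0,0,0,a), a,b,c,d ∈ ℝ, under the commutator bracket. -/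
open scoped BigOperators

/-- The four symmetry vector fields on ℝ × ℝ³ (coordinates `u 0 = t`,
`u 1 = q₁`, `u 2 = q₂`, `u 3 = q₃`):
`u₁ = −t∂ₜ + q₁∂₁ + q₂∂₂ + q₃∂₃`, `u₂ = ∂ₜ`, `u₃ = ∂₃`, `u₄ = q₂∂₁ − q₁∂₂`. -/
noncomputable def symVF : Fin 4 → ((Fin 4 → ℝ) → (Fin 4 → ℝ))
  | 0 => fun u => ![-u 0, u 1, u 2, u 3]
  | 1 => fun _ => ![1, 0, 0, 0]
  | 2 => fun _ => ![0, 0, 0, 1]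
  | 3 => fun u => ![0, u 2, -u 1, 0]

/-- The Lie bracket of vector fields on ℝ⁴:
`[X,Y] = DY·X − DX·Y`, corresponding to `[X,Y]f = X(Yf) − Y(Xf)`. -/
noncomputable def vfBracket (X Y : (Fin 4 → ℝ) → (Fin 4 → ℝ)) :
    (Fin 4 → ℝ) → (Fin 4 → ℝ) :=
  fun u => fderiv ℝ Y u (X u) - fderiv ℝ X u (Y u)

/-- The matrix Lie algebra basis: `A a b c d` has first row `(0,d,b,c)`,
zero second row, third row `(0,0,−a,0)`, fourth row `(0,0,0,a)`. -/
noncomputable def symMat : Fin 4 → Matrix (Fin 4) (Fin 4) ℝ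
  | 0 => !![0, 0, 0, 0; 0, 0, 0, 0; 0, 0, -1, 0; 0, 0, 0, 1]
  | 1 => !![0, 0, 1, 0; 0, 0, 0, 0; 0, 0, 0, 0; 0, 0, 0, 0]
  | 2 => !![0, 0, 0, 1; 0, 0, 0, 0; 0, 0, 0, 0; 0, 0, 0, 0]
  | 3 => !![0, 1, 0, 0; 0, 0, 0, 0; 0, 0, 0, 0; 0, 0, 0, 0]

/-! All four fields are affine, `u ↦ M u + b`. The bracket of two affine fields is again affine:
`[M·+a, N·+b] = (NM − MN)·+(Na − Mb)`, and affine fields depend linearly on `(M, b)`. So the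
bracket relations of the `uᵢ` reduce to identities between their `4 × 4` linear parts and their
translation vectors, which, like the commutators of the `Aᵢ`, are finite computations. -/

open Matrix

theorem fderiv_mulVec_add_apply {𝕜 m n : Type*} [NontriviallyNormedField 𝕜] [CompleteSpace 𝕜]
    [Fintype m] [Fintype n] (M : Matrix m n 𝕜) (b : m → 𝕜) (u v : n → 𝕜) :
    fderiv 𝕜 (fun w => M *ᵥ w + b) u v = M *ᵥ v := by
  have hM : M.mulVec = ⇑(LinearMap.toContinuousLinearMap M.mulVecLin) := rfl
  rw [fderiv_add_const, hM, ContinuousLinearMap.fderiv]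

def affineVF {R n : Type*} [NonUnitalNonAssocSemiring R] [Fintype n] (M : Matrix n n R)
    (b : n → R) : (n → R) → (n → R) :=
  fun u => M *ᵥ u + b

theorem sum_smul_affineVF {R ι n : Type*} [CommSemiring R] [Fintype n] (s : Finset ι)
    (c : ι → R) (M : ι → Matrix n n R) (b : ι → n → R) :
    ∑ k ∈ s, c k • affineVF (M k) (b k) = affineVF (∑ k ∈ s, c k • M k) (∑ k ∈ s, c k • b k) := by
  funext u
  simp only [affineVF, Finset.sum_apply, Pi.smul_apply, smul_add, Finset.sum_add_distrib,
    sum_mulVec, smul_mulVec]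

theorem vfBracket_affineVF (M N : Matrix (Fin 4) (Fin 4) ℝ) (a b : Fin 4 → ℝ) :
    vfBracket (affineVF M a) (affineVF N b) = affineVF (N * M - M * N) (N *ᵥ a - M *ᵥ b) := by
  funext u
  unfold vfBracket affineVF
  simp only [fderiv_mulVec_add_apply, mulVec_add, sub_mulVec, mulVec_mulVec]
  abel

def symVFLinearPart : Fin 4 → Matrix (Fin 4) (Fin 4) ℝ
  | 0 => !![-1, 0, 0, 0; 0, 1, 0, 0; 0, 0, 1, 0; 0, 0, 0, 1]
  | 1 => 0
  | 2 => 0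
  | 3 => !![0, 0, 0, 0; 0, 0, 1, 0; 0, -1, 0, 0; 0, 0, 0, 0]

def symVFTranslationPart : Fin 4 → Fin 4 → ℝ
  | 0 => 0
  | 1 => ![1, 0, 0, 0]
  | 2 => ![0, 0, 0, 1]
  | 3 => 0

theorem symVF_eq_affineVF (i : Fin 4) :
    symVF i = affineVF (symVFLinearPart i) (symVFTranslationPart i) := by
  funext u
  fin_cases i <;>
    simp [symVF, affineVF, symVFLinearPart, symVFTranslationPart, vecHead, vecTail]

def symStructConst : Fin 4 → Fin 4 → Fin 4 → ℝ
  | 0, 1 => ![0, 1, 0, 0]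
  | 1, 0 => ![0, -1, 0, 0]
  | 0, 2 => ![0, 0, -1, 0]
  | 2, 0 => ![0, 0, 1, 0]
  | _, _ => 0

theorem symVFLinearPart_commutator (i j : Fin 4) :
    symVFLinearPart j * symVFLinearPart i - symVFLinearPart i * symVFLinearPart j =
      ∑ k, symStructConst i j k • symVFLinearPart k := by
  fin_cases i <;> fin_cases j <;>
    simp [symVFLinearPart, symStructConst, Fin.sum_univ_four, ← Matrix.ext_iff,
      Fin.forall_fin_succ]

theorem symVFTranslationPart_bracket (i j : Fin 4) :
    symVFLinearPart j *ᵥ symVFTranslationPart i - symVFLinearPart i *ᵥ symVFTranslationPart j =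
      ∑ k, symStructConst i j k • symVFTranslationPart k := by
  fin_cases i <;> fin_cases j <;>
    simp [symVFLinearPart, symVFTranslationPart, symStructConst, Fin.sum_univ_four, funext_iff,
      Fin.forall_fin_succ]

theorem symMat_commutator (i j : Fin 4) :
    symMat i * symMat j - symMat j * symMat i = ∑ k, symStructConst i j k • symMat k := by
  fin_cases i <;> fin_cases j <;>
    simp [symMat, symStructConst, Fin.sum_univ_four, ← Matrix.ext_iff, funext_iff,
      Fin.forall_fin_succ]

theorem vfBracket_symVF (i j : Fin 4) :
    vfBracket (symVF i) (symVF j) = ∑ k, symStructConst i j k • symVF k := by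
  simp only [symVF_eq_affineVF, vfBracket_affineVF, symVFLinearPart_commutator,
    symVFTranslationPart_bracket, sum_smul_affineVF]

theorem linearIndependent_symVF : LinearIndependent ℝ symVF := by
  rw [Fintype.linearIndependent_iff]
  intro g hg
  -- at the point `(t, q) = (0, 1, 0, 0)` the four fields are `e₁, e₀, e₃, -e₂`
  have hg₁ : g 1 = 0 ∧ g 0 = 0 ∧ g 3 = 0 ∧ g 2 = 0 := by
    simpa [Fin.sum_univ_four, symVF, funext_iff, Fin.forall_fin_succ] using
      congrFun hg ![0, 1, 0, 0]
  simp [Fin.forall_fin_succ, hg₁]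

theorem linearIndependent_symMat : LinearIndependent ℝ symMat := by
  rw [Fintype.linearIndependent_iff]
  intro g hg
  -- the `Aᵢ` are supported on disjoint sets of entries
  have hg' : (g 3 = 0 ∧ g 1 = 0 ∧ g 2 = 0) ∧ g 0 = 0 := by
    simpa [Fin.sum_univ_four, symMat, ← Matrix.ext_iff, Fin.forall_fin_succ] using hg
  simp [Fin.forall_fin_succ, hg']

/-- The vector fields `u₁,…,u₄` are linearly independent and close into a
4-dimensional Lie algebra with brackets `[u₁,u₂] = u₂`, `[u₁,u₃] = −u₃` and all
other brackets zero; the matrices `A₁,…,A₄` are linearly independent and satisfy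
the same structure constants under the commutator, so the two Lie algebras are
isomorphic via `uᵢ ↦ Aᵢ`. -/
theorem symmetry_algebra_isomorphic :
    LinearIndependent ℝ symVF ∧
    LinearIndependent ℝ symMat ∧
    ∃ c : Fin 4 → Fin 4 → Fin 4 → ℝ,
      (∀ i j, vfBracket (symVF i) (symVF j) = ∑ k : Fin 4, c i j k • symVF k) ∧
      (∀ i j, symMat i * symMat j - symMat j * symMat i
          = ∑ k : Fin 4, c i j k • symMat k) ∧
      c 0 1 = ![0, 1, 0, 0] ∧ c 0 2 = ![0, 0, -1, 0] ∧
      c 0 3 = 0 ∧ c 1 2 = 0 ∧ c 1 3 = 0 ∧ c 2 3 = 0 :=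
  ⟨linearIndependent_symVF, linearIndependent_symMat, symStructConst, vfBracket_symVF,
    symMat_commutator, rfl, rfl, rfl, rfl, rfl, rfl⟩
end
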